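/- arXiv:0712.4267 — 2 statements merged into one kernel-verified Lean document; each statement's English description precedes it below -/
import Mathlib

section
/- Let g₁, …, gₘ : ℝ^n → ℝ^n be similarities with ratios λ₁, …, λₘ ∈ (0,1) whose images of a nonempty compact set K ⊆ ℝ^n are pairwise disjoint subsets of K, and suppose ∑_{j=1}^m λ_j^t ≥ 1 for some t ≥ 0. Then the attractor L of the iterated function system (g_j) has Hausdorff dimension at least t. -/
/-!
Since `L ⊆ K`, the first-level pieces `g j '' L` are disjoint compact sets, hence at some positive
distance `δ` from each other. A set of diameter at most `D` meeting `L` can therefore be followed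
down the tree of pieces `g_w '' L = g j₁ (⋯ (g jₖ '' L))` as long as `D < δ λ_w`, so it lies in a
piece with `δ λ_w ≤ D`. Disjointness and `∑ λⱼ ^ t ≥ 1` give Kraft's inequality `∑ λ_w ^ t ≥ 1`
for every finite cover of `L` by pieces, so every finite cover of `L` by sets of diameters at most
`D` has `∑ D ^ t ≥ δ ^ t`. By compactness this bounds `μH[t] L` below by `δ ^ t > 0`.
-/

open Set MeasureTheory Filter Topology Function Metric
open scoped NNReal ENNReal

theorem exists_pos_le_dist_of_pairwise_disjoint {ι X : Type*} [Finite ι] [MetricSpace X]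
    {S : ι → Set X} (hS : ∀ i, IsCompact (S i)) (hdisj : Pairwise (Disjoint on S)) :
    ∃ δ > 0, ∀ i j, i ≠ j → ∀ x ∈ S i, ∀ y ∈ S j, δ ≤ dist x y := by
  have hsep : ∀ i j, ∀ᶠ δ in 𝓝[>] (0 : ℝ), i ≠ j → ∀ x ∈ S i, ∀ y ∈ S j, δ ≤ dist x y := by
    intro i j
    by_cases hij : i = j
    · simp [hij]
    obtain ⟨r, hr, hrS⟩ := exists_pos_forall_lt_edist (hS i) (hS j).isClosed (hdisj hij)
    filter_upwards [Ioo_mem_nhdsGT hr] with δ hδ _ x hx y hy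
    have := hrS x hx y hy
    rw [edist_nndist, ENNReal.coe_lt_coe, ← NNReal.coe_lt_coe, coe_nndist] at this
    exact hδ.2.le.trans this.le
  obtain ⟨δ, hδ, hδ0⟩ :=
    ((eventually_all.2 fun i => eventually_all.2 (hsep i)).and self_mem_nhdsWithin).exists
  exact ⟨δ, hδ0, hδ⟩

theorem exists_pos_add_two_mul_rpow_lt {d s η : ℝ} (hs : 0 ≤ s) (hη : 0 < η) :
    ∃ σ > 0, (d + 2 * σ) ^ s < d ^ s + η := by
  have hcont : ContinuousAt (fun σ : ℝ => (d + 2 * σ) ^ s) 0 :=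
    (continuous_const.add (continuous_const.mul continuous_id)).continuousAt.rpow_const (Or.inr hs)
  have hlt : ∀ᶠ σ in 𝓝[>] (0 : ℝ), (d + 2 * σ) ^ s < d ^ s + η :=
    nhdsWithin_le_nhds (hcont.eventually (gt_mem_nhds (by simpa using hη)))
  obtain ⟨σ, hσ, hσ0⟩ := (hlt.and self_mem_nhdsWithin).exists
  exact ⟨σ, hσ0, hσ⟩

/-- Thicken the sets of a countable cover slightly and pass to a finite subcover. -/
theorem le_hausdorffMeasure_of_forall_finite_cover {X : Type*} [MetricSpace X] [MeasurableSpace X]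
    [BorelSpace X] {L : Set X} (hL : IsCompact L) {s c : ℝ} (hs : 0 ≤ s)
    (h : ∀ (F : Finset ℕ) (V : ℕ → Set X) (D : ℕ → ℝ), (∀ n ∈ F, IsOpen (V n) ∧
      (V n ∩ L).Nonempty ∧ 0 < D n ∧ ∀ x ∈ V n, ∀ y ∈ V n, dist x y ≤ D n) →
      L ⊆ ⋃ n ∈ F, V n → c ≤ ∑ n ∈ F, D n ^ s) :
    ENNReal.ofReal c ≤ μH[s] L := by
  classical
  rw [Measure.hausdorffMeasure_apply]
  refine le_iSup₂_of_le 1 one_pos <| le_iInf₂ fun A hA => le_iInf fun hA1 => ?_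
  refine ENNReal.le_of_forall_pos_le_add fun ε hε _ => ?_
  obtain ⟨η, hη, hηε⟩ := ENNReal.exists_pos_sum_of_countable (ENNReal.coe_ne_zero.2 hε.ne') ℕ
  have hbdd : ∀ n, Bornology.IsBounded (A n) := fun n =>
    isBounded_iff_ediam_ne_top.2 (ne_top_of_le_ne_top ENNReal.one_ne_top (hA1 n))
  choose σ hσ hση using fun n => exists_pos_add_two_mul_rpow_lt (d := diam (A n)) hs (hη n)
  let V n := thickening (σ n) (A n)
  obtain ⟨F, hF⟩ := hL.elim_finite_subcover V (fun n => isOpen_thickening)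
    (hA.trans (iUnion_mono fun n => self_subset_thickening (hσ n) _))
  let F' := F.filter fun n => (V n ∩ L).Nonempty
  have hF' : L ⊆ ⋃ n ∈ F', V n := fun x hx => by
    obtain ⟨n, hn, hxV⟩ := mem_iUnion₂.1 (hF hx)
    exact mem_iUnion₂.2 ⟨n, Finset.mem_filter.2 ⟨hn, x, hxV, hx⟩, hxV⟩
  have hc := h F' V (fun n => diam (A n) + 2 * σ n) (fun n hn => ⟨isOpen_thickening,
    (Finset.mem_filter.1 hn).2, by have := hσ n; positivity, fun x hx y hy =>
      (dist_le_diam_of_mem (hbdd n).thickening hx hy).trans (diam_thickening_le _ (hσ n).le)⟩) hF'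
  have hterm : ∀ n ∈ F',
      ENNReal.ofReal (diam (A n) ^ s) = ⨆ _ : (A n).Nonempty, ediam (A n) ^ s := by
    intro n hn
    obtain ⟨x, hx, -⟩ := (Finset.mem_filter.1 hn).2
    obtain ⟨z, hz, -⟩ := mem_thickening_iff.1 hx
    rw [iSup_pos ⟨z, hz⟩, ← ENNReal.ofReal_rpow_of_nonneg diam_nonneg hs]
    congr 1
    exact ENNReal.ofReal_toReal (isBounded_iff_ediam_ne_top.1 (hbdd n))
  calc ENNReal.ofReal c ≤ ENNReal.ofReal (∑ n ∈ F', (diam (A n) ^ s + η n)) :=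
        ENNReal.ofReal_le_ofReal (hc.trans (Finset.sum_le_sum fun n _ => (hση n).le))
    _ = ∑ n ∈ F', (⨆ _ : (A n).Nonempty, ediam (A n) ^ s) + ∑ n ∈ F', (η n : ℝ≥0∞) := by
      rw [ENNReal.ofReal_sum_of_nonneg fun n _ => by positivity, ← Finset.sum_add_distrib]
      refine Finset.sum_congr rfl fun n hn => ?_
      rw [ENNReal.ofReal_add (by positivity) (by positivity), hterm n hn, ENNReal.ofReal_coe_nnreal]
    _ ≤ (∑' n, ⨆ _ : (A n).Nonempty, ediam (A n) ^ s) + ∑' n, (η n : ℝ≥0∞) :=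
      add_le_add (ENNReal.sum_le_tsum _) (ENNReal.sum_le_tsum _)
    _ ≤ _ := by gcongr

theorem ofReal_le_dimH_of_hausdorffMeasure_ne_zero {X : Type*} [EMetricSpace X] [MeasurableSpace X]
    [BorelSpace X] {A : Set X} {s : ℝ} (h : μH[s] A ≠ 0) : ENNReal.ofReal s ≤ dimH A := by
  rcases le_or_gt s 0 with hs | hs
  · simp [ENNReal.ofReal_of_nonpos hs]
  · exact le_dimH_of_hausdorffMeasure_ne_zero (d := s.toNNReal) (by rwa [Real.coe_toNNReal _ hs.le])

/-- Compare the point of `L` farthest from `K` with its preimage under the contraction that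
produced it. -/
theorem attractor_subset_of_mapsTo {ι X : Type*} [MetricSpace X] {g : ι → X → X} {r : ι → ℝ≥0}
    (hg : ∀ j, ContractingWith (r j) (g j)) {K L : Set X} (hK : IsCompact K) (hKne : K.Nonempty)
    (hgK : ∀ j, MapsTo (g j) K K) (hLc : IsCompact L) (hL : L ⊆ ⋃ j, g j '' L) : L ⊆ K := by
  rcases L.eq_empty_or_nonempty with rfl | hLne
  · exact empty_subset K
  obtain ⟨x₀, hx₀L, hx₀⟩ := hLc.exists_isMaxOn hLne (continuous_infDist_pt K).continuousOn
  obtain ⟨j, y, hyL, rfl⟩ := mem_iUnion.1 (hL hx₀L)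
  obtain ⟨z, hzK, hyz⟩ := hK.exists_infDist_eq_dist hKne y
  have hfar : infDist (g j y) K ≤ r j * infDist (g j y) K :=
    calc infDist (g j y) K ≤ dist (g j y) (g j z) := infDist_le_dist_of_mem (hgK j hzK)
      _ ≤ r j * dist y z := (hg j).2.dist_le_mul y z
      _ = r j * infDist y K := by rw [hyz]
      _ ≤ r j * infDist (g j y) K := mul_le_mul_of_nonneg_left (hx₀ hyL) (r j).2
  have hzero : infDist (g j y) K = 0 := by
    have : (r j : ℝ) < 1 := (hg j).1
    nlinarith [infDist_nonneg (x := g j y) (s := K)]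
  intro x hx
  rw [← hK.isClosed.closure_eq, mem_closure_iff_infDist_zero hKne]
  exact le_antisymm (hzero ▸ hx₀ hx) infDist_nonneg

section Words

variable {ι X : Type*}

def wordMap (g : ι → X → X) : List ι → X → X
  | [] => id
  | j :: w => g j ∘ wordMap g w

@[simp] lemma wordMap_nil (g : ι → X → X) : wordMap g [] = id := rfl

@[simp] lemma wordMap_cons (g : ι → X → X) (j : ι) (w : List ι) :
    wordMap g (j :: w) = g j ∘ wordMap g w := rfl

lemma wordMap_append (g : ι → X → X) (w v : List ι) :
    wordMap g (w ++ v) = wordMap g w ∘ wordMap g v := by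
  induction w with
  | nil => rfl
  | cons j w ih => simp [ih, Function.comp_assoc]

lemma mapsTo_wordMap {g : ι → X → X} {L : Set X} (hg : ∀ j, MapsTo (g j) L L) (w : List ι) :
    MapsTo (wordMap g w) L L := by
  induction w with
  | nil => exact mapsTo_id L
  | cons j w ih => exact (hg j).comp ih

lemma dist_wordMap [PseudoMetricSpace X] {g : ι → X → X} {lam : ι → ℝ}
    (hsim : ∀ j x y, dist (g j x) (g j y) = lam j * dist x y) (w : List ι) (x y : X) :
    dist (wordMap g w x) (wordMap g w y) = (w.map lam).prod * dist x y := by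
  induction w with
  | nil => simp
  | cons j w ih => simp [hsim, ih, mul_assoc]

end Words

section Kraft

variable {ι κ X : Type*} {g : ι → X → X} {L : Set X}

lemma subset_iUnion_tail_of_subset_iUnion [DecidableEq ι] (hgL : ∀ j, MapsTo (g j) L L)
    (hinj : ∀ j, InjOn (g j) L) (hdisj : Pairwise (Disjoint on fun j => g j '' L))
    {F : Finset κ} {w : κ → List ι} (hnil : ∀ n ∈ F, w n ≠ [])
    (hcov : L ⊆ ⋃ n ∈ F, wordMap g (w n) '' L) (j : ι) :
    L ⊆ ⋃ n ∈ F.filter (fun n => (w n).head? = some j), wordMap g (w n).tail '' L := by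
  intro x hx
  obtain ⟨n, hn, y, hy, hyx⟩ := mem_iUnion₂.1 (hcov (hgL j hx))
  obtain ⟨i, v, hv⟩ := List.exists_cons_of_ne_nil (hnil n hn)
  rw [hv, wordMap_cons, comp_apply] at hyx
  have hvy : wordMap g v y ∈ L := mapsTo_wordMap hgL v hy
  obtain rfl : i = j := by
    by_contra hij
    exact disjoint_left.1 (hdisj hij) ⟨_, hvy, hyx⟩ ⟨x, hx, rfl⟩
  refine mem_iUnion₂.2 ⟨n, Finset.mem_filter.2 ⟨hn, by simp [hv]⟩, y, hy, ?_⟩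
  rw [hv, List.tail_cons]
  exact hinj i hvy hx hyx

lemma sum_sum_filter_head?_le_sum [Fintype ι] [DecidableEq ι] (F : Finset κ) (w : κ → List ι)
    {f : κ → ℝ} (hf : ∀ n ∈ F, 0 ≤ f n) :
    ∑ j, ∑ n ∈ F.filter (fun n => (w n).head? = some j), f n ≤ ∑ n ∈ F, f n := by
  refine (Finset.sum_map Finset.univ Embedding.some fun o =>
    ∑ n ∈ F with (w n).head? = o, f n).symm.trans_le ?_
  exact Finset.sum_fiberwise_le_sum_of_sum_fiber_nonneg fun _ _ =>
    Finset.sum_nonneg fun n hn => hf n (Finset.mem_filter.1 hn).1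

theorem one_le_sum_prod_of_subset_iUnion_wordMap [Fintype ι] {p : ι → ℝ} (hp : ∀ j, 0 ≤ p j)
    (hsum : 1 ≤ ∑ j, p j) (hLne : L.Nonempty) (hgL : ∀ j, MapsTo (g j) L L)
    (hinj : ∀ j, InjOn (g j) L) (hdisj : Pairwise (Disjoint on fun j => g j '' L))
    {F : Finset κ} {w : κ → List ι} (hcov : L ⊆ ⋃ n ∈ F, wordMap g (w n) '' L) :
    1 ≤ ∑ n ∈ F, ((w n).map p).prod := by
  classical
  have hprod_nonneg : ∀ v : List ι, 0 ≤ (v.map p).prod := fun v =>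
    List.prod_nonneg (List.forall_mem_map.2 fun j _ => hp j)
  have of_nil : ∀ {F : Finset κ} {w : κ → List ι} {n}, n ∈ F → w n = [] →
      1 ≤ ∑ n ∈ F, ((w n).map p).prod := by
    intro F w n hn hw
    exact (Finset.single_le_sum (fun n _ => hprod_nonneg (w n)) hn).trans_eq' (by simp [hw])
  suffices ∀ N (F : Finset κ) (w : κ → List ι), (∀ n ∈ F, (w n).length ≤ N) →
      L ⊆ ⋃ n ∈ F, wordMap g (w n) '' L → 1 ≤ ∑ n ∈ F, ((w n).map p).prod from
    this _ F w (fun n hn => Finset.le_sup (f := fun n => (w n).length) hn) hcov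
  intro N
  induction N with
  | zero =>
    intro F w hlen hcov
    obtain ⟨n, hn, -⟩ := mem_iUnion₂.1 (hcov hLne.some_mem)
    exact of_nil hn (List.eq_nil_of_length_eq_zero (Nat.le_zero.1 (hlen n hn)))
  | succ N ih =>
    intro F w hlen hcov
    by_cases hnil : ∃ n ∈ F, w n = []
    · obtain ⟨n, hn, hw⟩ := hnil
      exact of_nil hn hw
    push Not at hnil
    let Fj (j : ι) := F.filter fun n => (w n).head? = some j
    have hcons : ∀ j, ∀ n ∈ Fj j, w n = j :: (w n).tail := fun j n hn =>
      List.eq_cons_of_mem_head? (Finset.mem_filter.1 hn).2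
    have hfiber : ∀ j, 1 ≤ ∑ n ∈ Fj j, ((w n).tail.map p).prod := fun j =>
      ih (Fj j) (fun n => (w n).tail)
        (fun n hn => List.length_tail.trans_le
          (Nat.sub_le_of_le_add (hlen n (Finset.mem_filter.1 hn).1)))
        (subset_iUnion_tail_of_subset_iUnion hgL hinj hdisj hnil hcov j)
    calc (1 : ℝ) ≤ ∑ j, p j := hsum
      _ ≤ ∑ j, p j * ∑ n ∈ Fj j, ((w n).tail.map p).prod :=
        Finset.sum_le_sum fun j _ => le_mul_of_one_le_right (hp j) (hfiber j)
      _ = ∑ j, ∑ n ∈ Fj j, ((w n).map p).prod := by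
        refine Finset.sum_congr rfl fun j _ => ?_
        rw [Finset.mul_sum]
        refine Finset.sum_congr rfl fun n hn => ?_
        rw [hcons j n hn]
        simp
      _ ≤ ∑ n ∈ F, ((w n).map p).prod :=
        sum_sum_filter_head?_le_sum F w fun n _ => hprod_nonneg (w n)

end Kraft

section Metric

variable {ι X : Type*} [MetricSpace X] {g : ι → X → X} {lam : ι → ℝ} {L : Set X} {δ : ℝ}

/-- If two points of a piece `g_w '' L` lie in different subpieces `g_w (g_i '' L)`, they are at
least `δ · λ_w` apart, so a set of smaller diameter meets only one subpiece. -/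
lemma exists_subset_wordMap_append (hlam : ∀ j, 0 ≤ lam j)
    (hsim : ∀ j x y, dist (g j x) (g j y) = lam j * dist x y) (hL : L ⊆ ⋃ j, g j '' L)
    (hsep : ∀ i j, i ≠ j → ∀ x ∈ g i '' L, ∀ y ∈ g j '' L, δ ≤ dist x y)
    {U : Set X} (hU : (U ∩ L).Nonempty) {w : List ι} (hw : U ∩ L ⊆ wordMap g w '' L)
    (hUw : ∀ x ∈ U, ∀ y ∈ U, dist x y < δ * (w.map lam).prod) :
    ∃ j, U ∩ L ⊆ wordMap g (w ++ [j]) '' L := by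
  obtain ⟨x, hxU, hxL⟩ := hU
  obtain ⟨a, haL, rfl⟩ := hw ⟨hxU, hxL⟩
  obtain ⟨j, hja⟩ := mem_iUnion.1 (hL haL)
  refine ⟨j, fun y hy => ?_⟩
  obtain ⟨b, hbL, rfl⟩ := hw hy
  obtain ⟨i, c, hcL, rfl⟩ := mem_iUnion.1 (hL hbL)
  obtain rfl : i = j := by
    by_contra hij
    have hδ := hsep i j hij _ ⟨c, hcL, rfl⟩ a hja
    have hprod : 0 ≤ (w.map lam).prod := List.prod_nonneg (List.forall_mem_map.2 fun k _ => hlam k)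
    have hxy := hUw _ hy.1 _ hxU
    rw [dist_wordMap hsim, mul_comm δ] at hxy
    exact hxy.not_ge (mul_le_mul_of_nonneg_left hδ hprod)
  exact ⟨c, hcL, by simp [wordMap_append]⟩

/-- The descent of `exists_subset_wordMap_append` terminates because `λ_w ≤ r ^ |w|` for some
`r < 1`. -/
lemma exists_subset_wordMap_mul_le [Finite ι] (hlam : ∀ j, 0 ≤ lam j ∧ lam j < 1)
    (hsim : ∀ j x y, dist (g j x) (g j y) = lam j * dist x y) (hL : L ⊆ ⋃ j, g j '' L)
    (hsep : ∀ i j, i ≠ j → ∀ x ∈ g i '' L, ∀ y ∈ g j '' L, δ ≤ dist x y) (hδ : 0 < δ)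
    {U : Set X} (hU : (U ∩ L).Nonempty) {D : ℝ} (hD : 0 < D)
    (hUD : ∀ x ∈ U, ∀ y ∈ U, dist x y ≤ D) :
    ∃ w : List ι, U ∩ L ⊆ wordMap g w '' L ∧ δ * (w.map lam).prod ≤ D := by
  by_contra! hlarge
  have hdeep : ∀ k, ∃ w : List ι, w.length = k ∧ U ∩ L ⊆ wordMap g w '' L := by
    intro k
    induction k with
    | zero => exact ⟨[], rfl, by simp⟩
    | succ k ih =>
      obtain ⟨w, rfl, hw⟩ := ih
      obtain ⟨j, hj⟩ := exists_subset_wordMap_append (fun j => (hlam j).1) hsim hL hsep hU hw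
        fun x hx y hy => (hUD x hx y hy).trans_lt (hlarge w hw)
      exact ⟨w ++ [j], by simp, hj⟩
  have hbound : ∀ᶠ r in 𝓝[<] (1 : ℝ), (∀ j, lam j ≤ r) ∧ r < 1 :=
    (eventually_all.2 fun j => mem_of_superset (Ioo_mem_nhdsLT (hlam j).2) fun _ hr => hr.1.le).and
      self_mem_nhdsWithin
  obtain ⟨r, hr, hr1⟩ := hbound.exists
  obtain ⟨k, hk⟩ := exists_pow_lt_of_lt_one (div_pos hD hδ) hr1
  obtain ⟨w, rfl, hw⟩ := hdeep k
  have hprod : (w.map lam).prod ≤ r ^ w.length :=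
    (List.prod_map_le_prod_map₀ lam (fun _ => r) (fun j _ => (hlam j).1) fun j _ => hr j).trans_eq
      (by simp)
  have := (hlarge w hw).trans_le (mul_le_mul_of_nonneg_left hprod hδ.le)
  rw [lt_div_iff₀ hδ] at hk
  linarith

theorem rpow_le_sum_rpow_of_subset_iUnion [Fintype ι] {κ : Type*}
    (hlam : ∀ j, 0 < lam j ∧ lam j < 1)
    (hsim : ∀ j x y, dist (g j x) (g j y) = lam j * dist x y) (hLne : L.Nonempty)
    (hL : L = ⋃ j, g j '' L)
    (hsep : ∀ i j, i ≠ j → ∀ x ∈ g i '' L, ∀ y ∈ g j '' L, δ ≤ dist x y) (hδ : 0 < δ)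
    {s : ℝ} (hs : 0 ≤ s) (hsum : 1 ≤ ∑ j, lam j ^ s) {F : Finset κ} {V : κ → Set X} {D : κ → ℝ}
    (hV : ∀ n ∈ F, (V n ∩ L).Nonempty ∧ 0 < D n ∧ ∀ x ∈ V n, ∀ y ∈ V n, dist x y ≤ D n)
    (hcov : L ⊆ ⋃ n ∈ F, V n) :
    δ ^ s ≤ ∑ n ∈ F, D n ^ s := by
  have hlam' : ∀ j, 0 ≤ lam j ∧ lam j < 1 := fun j => ⟨(hlam j).1.le, (hlam j).2⟩
  have hword : ∀ n ∈ F, ∃ w : List ι, V n ∩ L ⊆ wordMap g w '' L ∧ δ * (w.map lam).prod ≤ D n :=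
    fun n hn => exists_subset_wordMap_mul_le hlam' hsim hL.subset hsep hδ (hV n hn).1 (hV n hn).2.1
      (hV n hn).2.2
  choose! w hwV hwD using hword
  have hgL : ∀ j, MapsTo (g j) L L := fun j =>
    mapsTo_iff_image_subset.2 ((subset_iUnion (fun j => g j '' L) j).trans hL.superset)
  have hinj : ∀ j, InjOn (g j) L := fun j x _ y _ hxy => dist_eq_zero.1 <|
    (mul_eq_zero.1 ((hsim j x y).symm.trans (by rw [hxy, dist_self]))).resolve_left (hlam j).1.ne'
  have hdisj : Pairwise (Disjoint on fun j => g j '' L) := fun i j hij =>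
    disjoint_left.2 fun x hi hj => (hsep i j hij x hi x hj).not_gt (by simpa using hδ)
  have hcovw : L ⊆ ⋃ n ∈ F, wordMap g (w n) '' L := fun x hx => by
    obtain ⟨n, hn, hxV⟩ := mem_iUnion₂.1 (hcov hx)
    exact mem_iUnion₂.2 ⟨n, hn, hwV n hn ⟨hxV, hx⟩⟩
  have hkraft := one_le_sum_prod_of_subset_iUnion_wordMap (p := fun j => lam j ^ s)
    (fun j => Real.rpow_nonneg (hlam j).1.le s) hsum hLne hgL hinj hdisj hcovw
  have hδs : 0 < δ ^ s := Real.rpow_pos_of_pos hδ s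
  have hprod : ∀ v : List ι, 0 ≤ (v.map lam).prod := fun v =>
    List.prod_nonneg (List.forall_mem_map.2 fun j _ => (hlam j).1.le)
  calc δ ^ s ≤ δ ^ s * ∑ n ∈ F, ((w n).map fun j => lam j ^ s).prod :=
        le_mul_of_one_le_right hδs.le hkraft
    _ = ∑ n ∈ F, (δ * ((w n).map lam).prod) ^ s := by
      rw [Finset.mul_sum]
      refine Finset.sum_congr rfl fun n _ => ?_
      rw [Real.list_prod_map_rpow' _ _ (fun j _ => (hlam j).1.le), Real.mul_rpow hδ.le (hprod _)]
    _ ≤ ∑ n ∈ F, D n ^ s := Finset.sum_le_sum fun n hn => Real.rpow_le_rpow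
      (mul_nonneg hδ.le (hprod _)) (hwD n hn) hs

end Metric

/-- Moran's lower bound: if `g₁, …, gₘ` are contracting similarities of `ℝⁿ`
with ratios `λⱼ ∈ (0,1)`, whose images of a nonempty compact set `K` are
pairwise disjoint subsets of `K`, and `∑ λⱼ ^ t ≥ 1`, then the attractor `L`
(the unique nonempty compact set with `L = ⋃ j, g j '' L`) has Hausdorff
dimension at least `t`. -/
theorem stmt_2 {n m : ℕ} (g : Fin m → EuclideanSpace ℝ (Fin n) → EuclideanSpace ℝ (Fin n))
    (lam : Fin m → ℝ) (hlam : ∀ j, 0 < lam j ∧ lam j < 1)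
    (hsim : ∀ j, ∀ x y, dist (g j x) (g j y) = lam j * dist x y)
    (K : Set (EuclideanSpace ℝ (Fin n))) (hK : IsCompact K) (hKne : K.Nonempty)
    (hsub : ∀ j, g j '' K ⊆ K)
    (hdisj : ∀ i j, i ≠ j → Disjoint (g i '' K) (g j '' K))
    (t : ℝ) (ht : 0 ≤ t) (hsum : 1 ≤ ∑ j, lam j ^ t)
    (L : Set (EuclideanSpace ℝ (Fin n))) (hLc : IsCompact L) (hLne : L.Nonempty)
    (hL : L = ⋃ j, g j '' L) :
    ENNReal.ofReal t ≤ dimH L := by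
  have hcontr : ∀ j, ContractingWith (lam j).toNNReal (g j) := fun j =>
    ⟨by simpa using (hlam j).2, LipschitzWith.of_dist_le_mul fun x y => by
      rw [hsim, Real.coe_toNNReal _ (hlam j).1.le]⟩
  have hLK : L ⊆ K := attractor_subset_of_mapsTo hcontr hK hKne
    (fun j => mapsTo_iff_image_subset.2 (hsub j)) hLc hL.subset
  obtain ⟨δ, hδ, hsep⟩ := exists_pos_le_dist_of_pairwise_disjoint
    (fun j => hLc.image (hcontr j).2.continuous)
    (fun i j hij => (hdisj i j hij).mono (image_mono hLK) (image_mono hLK))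
  have hμ : ENNReal.ofReal (δ ^ t) ≤ μH[t] L :=
    le_hausdorffMeasure_of_forall_finite_cover hLc ht fun _ _ _ hV hcov =>
      rpow_le_sum_rpow_of_subset_iUnion hlam hsim hLne hL hsep hδ ht hsum
        (fun n hn => (hV n hn).2) hcov
  exact ofReal_le_dimH_of_hausdorffMeasure_ne_zero
    ((ENNReal.ofReal_pos.2 (Real.rpow_pos_of_pos hδ t)).trans_le hμ).ne'
end

section
/- Let f : U → ℂ be holomorphic on an open set U ⊆ ℂ and let K ⊆ U be compact and forward invariant (f(K) ⊆ K). Suppose |(f^n)'(z)| ≥ λ > 1 for all z ∈ K and some fixed n. Then there exists δ > 0 such that for every z ∈ K and every m ≥ 1, the inverse branch of f^{nm} fixing the orbit of z is well-defined and univalent on the disk of radius δ around f^{nm}(z); consequently every point of K lies in the radial Julia set in the sense that disks of a fixed radius δ around infinitely many forward iterates pull back univalently along the orbit. -/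
open Set Metric Function
open Filter Topology

/-! Near the compact set `K`, continuity of `(f^n)'` upgrades the pointwise bound `|(f^n)'| ≥ λ`
to a uniform expansion by `μ = (λ + 1) / 2 > 1` on balls of a fixed radius `r` centred on `K`.
By the open mapping theorem, `f^n` then maps the ball `B(z, r)` injectively onto a set containing
`B(f^n z, δ)` with `δ = μ r / 2`, and the inverse is holomorphic and contracting; in particular it
maps `B(f^n z, δ)` back into `B(z, δ)`. Since `K` is forward invariant, these branches compose
along every orbit, and the composite is an inverse branch of `f^{nm}` on `B(f^{nm} z, δ)`. -/

theorem IsCompact.exists_pos_forall_dist_lt {α β : Type*} [PseudoMetricSpace α]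
    [PseudoMetricSpace β] {K : Set α} (hK : IsCompact K) {φ : α → β}
    (hφ : ∀ z ∈ K, ContinuousAt φ z) {ε : ℝ} (hε : 0 < ε) :
    ∃ r > 0, ∀ z ∈ K, ∀ a, dist a z < r → dist (φ a) (φ z) < ε := by
  obtain ⟨r, hr, h⟩ := mem_uniformity_dist.1
    (hK.uniformContinuousAt_of_continuousAt φ hφ (dist_mem_uniformity hε))
  refine ⟨r, hr, fun z hz a ha => ?_⟩
  rw [dist_comm] at ha ⊢
  exact h ha hz

theorem Convex.sub_mul_dist_le_dist_image {𝕜 G : Type*} [RCLike 𝕜] [NormedAddCommGroup G]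
    [NormedSpace 𝕜 G] {F F' : 𝕜 → G} {s : Set 𝕜} {c : G} {ε : ℝ} (hs : Convex ℝ s)
    (hF : ∀ x ∈ s, HasDerivWithinAt F (F' x) s x) (hF' : ∀ x ∈ s, ‖F' x - c‖ ≤ ε)
    {a b : 𝕜} (ha : a ∈ s) (hb : b ∈ s) : (‖c‖ - ε) * dist a b ≤ dist (F a) (F b) := by
  have hlin : ‖(F a - a • c) - (F b - b • c)‖ ≤ ε * ‖a - b‖ :=
    hs.norm_image_sub_le_of_norm_hasDerivWithin_le
      (fun x hx => by simpa using (hF x hx).sub ((hasDerivWithinAt_id x s).smul_const c)) hF' hb ha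
  have hsplit : (a - b) • c = (F a - F b) - ((F a - a • c) - (F b - b • c)) := by
    rw [sub_smul]; abel
  have : ‖c‖ * ‖a - b‖ ≤ ‖F a - F b‖ + ε * ‖a - b‖ := by
    rw [mul_comm, ← norm_smul, hsplit]
    exact (norm_sub_le _ _).trans (by gcongr)
  rw [dist_eq_norm, dist_eq_norm]
  linarith

theorem dist_le_div_of_leftInvOn {α β : Type*} [PseudoMetricSpace α] [PseudoMetricSpace β]
    {F : α → β} {g : β → α} {s : Set α} {t : Set β} {μ : ℝ} (hμ : 0 < μ)
    (hexp : ∀ a ∈ s, ∀ b ∈ s, μ * dist a b ≤ dist (F a) (F b)) (hg : MapsTo g t s)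
    (hFg : LeftInvOn F g t) : ∀ w ∈ t, ∀ w' ∈ t, dist (g w) (g w') ≤ dist w w' / μ := by
  intro w hw w' hw'
  rw [le_div_iff₀ hμ, mul_comm]
  simpa only [hFg hw, hFg hw'] using hexp _ (hg hw) _ (hg hw')

section InverseBranch

variable {𝕜 E : Type*} [NontriviallyNormedField 𝕜] [NormedAddCommGroup E] [NormedSpace 𝕜 E]

theorem exists_isOpen_differentiableOn_iterate {f : E → E} {U K : Set E} (hU : IsOpen U)
    (hf : DifferentiableOn 𝕜 f U) (hKU : K ⊆ U) (hK : MapsTo f K K) :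
    ∀ k : ℕ, ∃ V, IsOpen V ∧ K ⊆ V ∧ DifferentiableOn 𝕜 f^[k] V
  | 0 => ⟨U, hU, hKU, differentiableOn_id⟩
  | k + 1 => by
    obtain ⟨V, hV, hKV, hfV⟩ := exists_isOpen_differentiableOn_iterate hU hf hKU hK k
    refine ⟨U ∩ f ⁻¹' V, hf.continuousOn.isOpen_inter_preimage hU hV,
      fun z hz => ⟨hKU hz, hKV (hK hz)⟩, ?_⟩
    rw [iterate_succ]
    exact hfV.comp (hf.mono inter_subset_left) fun z hz => hz.2

variable (𝕜) in
/-- Mapping `B(w₀, δ)` into `B(z, δ)`, with the same radius, is what lets branches along an orbit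
be composed. -/
structure IsInverseBranch (F g : E → E) (w₀ z : E) (δ : ℝ) : Prop where
  differentiableOn : DifferentiableOn 𝕜 g (ball w₀ δ)
  mapsTo : MapsTo g (ball w₀ δ) (ball z δ)
  apply_center : g w₀ = z
  leftInvOn : LeftInvOn F g (ball w₀ δ)

theorem IsInverseBranch.comp {F G g₁ g₂ : E → E} {w₀ y z : E} {δ : ℝ}
    (h₁ : IsInverseBranch 𝕜 F g₁ y z δ) (h₂ : IsInverseBranch 𝕜 G g₂ w₀ y δ) :
    IsInverseBranch 𝕜 (G ∘ F) (g₁ ∘ g₂) w₀ z δ where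
  differentiableOn := h₁.differentiableOn.comp h₂.differentiableOn h₂.mapsTo
  mapsTo := h₁.mapsTo.comp h₂.mapsTo
  apply_center := by rw [comp_apply, h₂.apply_center, h₁.apply_center]
  leftInvOn := h₂.leftInvOn.comp h₁.leftInvOn h₂.mapsTo

theorem exists_isInverseBranch_iterate {F : E → E} {K : Set E} {δ : ℝ} (hK : MapsTo F K K)
    (hF : ∀ z ∈ K, ∃ g, IsInverseBranch 𝕜 F g (F z) z δ) :
    ∀ m : ℕ, ∀ z ∈ K, ∃ g, IsInverseBranch 𝕜 F^[m] g (F^[m] z) z δ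
  | 0, z, _ => ⟨id, differentiableOn_id, mapsTo_id _, rfl, fun _ _ => rfl⟩
  | m + 1, z, hz => by
    obtain ⟨g₁, h₁⟩ := hF z hz
    obtain ⟨g₂, h₂⟩ := exists_isInverseBranch_iterate hK hF m (F z) (hK hz)
    rw [iterate_succ]
    exact ⟨g₁ ∘ g₂, h₁.comp h₂⟩

end InverseBranch

theorem exists_isInverseBranch_of_expanding {F : ℂ → ℂ} {z : ℂ} {r μ : ℝ} (hr : 0 < r)
    (hμ : 1 ≤ μ) (hF : ∀ a ∈ closedBall z r, DifferentiableAt ℂ F a)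
    (hF' : ∀ a ∈ closedBall z r, deriv F a ≠ 0)
    (hexp : ∀ a ∈ closedBall z r, ∀ b ∈ closedBall z r, μ * dist a b ≤ dist (F a) (F b)) :
    ∃ g, IsInverseBranch ℂ F g (F z) z (μ * r / 2) := by
  set s := closedBall z r
  have hz : z ∈ s := mem_closedBall_self hr.le
  have hinj : InjOn F s := fun a ha b hb hab => by
    have := hexp a ha b hb
    rw [hab, dist_self] at this
    exact dist_le_zero.1 (nonpos_of_mul_nonpos_right this (by linarith))
  have hnonconst : ∃ᶠ w in 𝓝 z, F w ≠ F z := by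
    have : ∀ᶠ w in 𝓝[≠] z, F w ≠ F z := by
      filter_upwards [nhdsWithin_le_nhds (closedBall_mem_nhds z hr), self_mem_nhdsWithin]
        with w hw hwz using fun h => hwz (hinj hw hz h)
    exact this.frequently.filter_mono nhdsWithin_le_nhds
  have hsurj : ball (F z) (μ * r / 2) ⊆ F '' s :=
    DiffContOnCl.ball_subset_image_closedBall
      (DifferentiableOn.diffContOnCl_ball (fun a ha => (hF a ha).differentiableWithinAt)
        subset_rfl) hr
      (fun w hw => by
        simpa [← dist_eq_norm, mem_sphere.1 hw, mul_comm] using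
          hexp w (sphere_subset_closedBall hw) z hz)
      hnonconst
  set g := invFunOn F s
  have hgs : MapsTo g (ball (F z) (μ * r / 2)) s := fun w hw => invFunOn_mem (hsurj hw)
  have hFg : LeftInvOn F g (ball (F z) (μ * r / 2)) := fun w hw => invFunOn_eq (hsurj hw)
  have hlip := dist_le_div_of_leftInvOn (by linarith) hexp hgs hFg
  have hgz : g (F z) = z := hinj.leftInvOn_invFunOn hz
  have hFz : F z ∈ ball (F z) (μ * r / 2) := mem_ball_self (by positivity)
  refine ⟨g, fun w hw => ?_, fun w hw => ?_, hgz, hFg⟩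
  · have hgc : ContinuousAt g w :=
      (LipschitzOnWith.of_dist_le_mul (K := ⟨μ⁻¹, by positivity⟩) fun a ha b hb =>
        (hlip a ha b hb).trans_eq (div_eq_inv_mul _ _)).continuousOn.continuousAt
          (isOpen_ball.mem_nhds hw)
    exact (HasDerivAt.of_local_left_inverse hgc (hF _ (hgs hw)).hasDerivAt (hF' _ (hgs hw))
      (eventually_of_mem (isOpen_ball.mem_nhds hw) hFg)).differentiableAt.differentiableWithinAt
  · rw [mem_ball] at hw ⊢
    calc dist (g w) z = dist (g w) (g (F z)) := by rw [hgz]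
      _ ≤ dist w (F z) / μ := hlip w hw (F z) hFz
      _ < μ * r / 2 := by
        rw [div_lt_iff₀ (by linarith)]
        nlinarith [mul_le_mul_of_nonneg_left hμ (by positivity : (0 : ℝ) ≤ μ * r / 2)]

theorem exists_isInverseBranch_of_le_norm_deriv {F : ℂ → ℂ} {V K : Set ℂ} (hV : IsOpen V)
    (hF : DifferentiableOn ℂ F V) (hK : IsCompact K) (hKV : K ⊆ V) {lam : ℝ} (hlam : 1 < lam)
    (hexp : ∀ z ∈ K, lam ≤ ‖deriv F z‖) :
    ∃ δ > 0, ∀ z ∈ K, ∃ g, IsInverseBranch ℂ F g (F z) z δ := by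
  set ε := (lam - 1) / 2 with hε
  have hderiv : ContinuousOn (deriv F) V := (hF.analyticOnNhd hV).deriv.continuousOn
  obtain ⟨r₀, hr₀, hr₀V⟩ := hK.exists_cthickening_subset_open hV hKV
  obtain ⟨r₁, hr₁, hr₁ε⟩ := hK.exists_pos_forall_dist_lt
    (fun z hz => hderiv.continuousAt (hV.mem_nhds (hKV hz))) (show 0 < ε by linarith)
  set r := min r₀ (r₁ / 2)
  have hr : 0 < r := by positivity
  refine ⟨(lam + 1) / 2 * r / 2, by positivity, fun z hz => ?_⟩
  have hballV : closedBall z r ⊆ V :=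
    ((closedBall_subset_cthickening hz r).trans (cthickening_mono (min_le_left _ _) K)).trans hr₀V
  have hdiff : ∀ a ∈ closedBall z r, DifferentiableAt ℂ F a :=
    fun a ha => hF.differentiableAt (hV.mem_nhds (hballV ha))
  have hclose : ∀ a ∈ closedBall z r, ‖deriv F a - deriv F z‖ ≤ ε := fun a ha => by
    rw [← dist_eq_norm]
    refine (hr₁ε z hz a ((mem_closedBall.1 ha).trans_lt ?_)).le
    exact (min_le_right _ _).trans_lt (half_lt_self hr₁)
  apply exists_isInverseBranch_of_expanding hr (by linarith) hdiff
  · intro a ha h0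
    have := hclose a ha
    rw [h0, zero_sub, norm_neg] at this
    linarith [hexp z hz, hε]
  · intro a ha b hb
    calc (lam + 1) / 2 * dist a b ≤ (‖deriv F z‖ - ε) * dist a b := by
          gcongr
          linarith [hexp z hz, hε]
      _ ≤ dist (F a) (F b) := (convex_closedBall z r).sub_mul_dist_le_dist_image
          (fun x hx => (hdiff x hx).hasDerivAt.hasDerivWithinAt) hclose ha hb

theorem stmt_15_general {U : Set ℂ} (hU : IsOpen U) (f : ℂ → ℂ)
    (hf : DifferentiableOn ℂ f U)
    (K : Set ℂ) (hK : IsCompact K) (hKU : K ⊆ U) (hinv : MapsTo f K K)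
    (n : ℕ) (lam : ℝ) (hlam : 1 < lam)
    (hexp : ∀ z ∈ K, lam ≤ ‖deriv (f^[n]) z‖) :
    ∃ δ : ℝ, 0 < δ ∧
      ∀ z ∈ K, ∀ m : ℕ, 1 ≤ m →
        ∃ g : ℂ → ℂ,
          DifferentiableOn ℂ g (ball (f^[n * m] z) δ) ∧
          InjOn g (ball (f^[n * m] z) δ) ∧
          g (f^[n * m] z) = z ∧
          ∀ w ∈ ball (f^[n * m] z) δ, f^[n * m] (g w) = w := by
  obtain ⟨V, hV, hKV, hfV⟩ := exists_isOpen_differentiableOn_iterate hU hf hKU hinv n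
  obtain ⟨δ, hδ, hbranch⟩ := exists_isInverseBranch_of_le_norm_deriv hV hfV hK hKV hlam hexp
  refine ⟨δ, hδ, fun z hz m _ => ?_⟩
  obtain ⟨g, hg⟩ := exists_isInverseBranch_iterate (hinv.iterate n) hbranch m z hz
  rw [iterate_mul]
  exact ⟨g, hg.differentiableOn, hg.leftInvOn.injOn, hg.apply_center, hg.leftInvOn⟩

/-- Points of a hyperbolic set lie in the radial Julia set: if `K ⊆ U` is
compact, forward invariant, and `|(f^n)'| ≥ λ > 1` on `K`, then there is a
uniform `δ > 0` such that for every `z ∈ K` and every `m ≥ 1` the inverse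
branch of `f^{nm}` sending `f^{nm}(z)` back to `z` is defined and univalent on
the disk of radius `δ` around `f^{nm}(z)`. -/
theorem stmt_15 {U : Set ℂ} (hU : IsOpen U) (f : ℂ → ℂ)
    (hf : DifferentiableOn ℂ f U)
    (K : Set ℂ) (hK : IsCompact K) (hKU : K ⊆ U) (hinv : MapsTo f K K)
    (n : ℕ) (hn : 1 ≤ n) (lam : ℝ) (hlam : 1 < lam)
    (hexp : ∀ z ∈ K, lam ≤ ‖deriv (f^[n]) z‖) :
    ∃ δ : ℝ, 0 < δ ∧
      ∀ z ∈ K, ∀ m : ℕ, 1 ≤ m →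
        ∃ g : ℂ → ℂ,
          DifferentiableOn ℂ g (ball (f^[n * m] z) δ) ∧
          InjOn g (ball (f^[n * m] z) δ) ∧
          g (f^[n * m] z) = z ∧
          ∀ w ∈ ball (f^[n * m] z) δ, f^[n * m] (g w) = w :=
  stmt_15_general hU f hf K hK hKU hinv n lam hlam hexp
end
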